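/- arXiv:0710.3872 — 3 statements merged into one kernel-verified Lean document; each statement's English description precedes it below -/
import Mathlib

section
/- Let B be a metabelian Lie algebra over a field k satisfying axiom Φ2. Then every nilpotent Lie subalgebra of B is abelian; in particular the Fitting radical Fit(B) is abelian, i.e. any two elements of B each of whose generated Lie ideal is nilpotent commute. -/
open LieAlgebra

universe u v w

/-- A Lie ring is metabelian if it satisfies the identity `⁅⁅x₁,x₂⁆,⁅x₃,x₄⁆⁆ = 0`. -/
def IsMetabelian (L : Type v) [LieRing L] : Prop :=
  ∀ a b c d : L, ⁅⁅a, b⁆, ⁅c, d⁆⁆ = 0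

variable (k : Type u) [Field k]

namespace LieMeta

/-- The canonical projection onto the quotient by a Lie ideal, as a Lie algebra morphism. -/
def mkHom {L : Type v} [LieRing L] [LieAlgebra k L] (I : LieIdeal k L) : L →ₗ⁅k⁆ L ⧸ I :=
  { I.toSubmodule.mkQ with
    map_lie' := fun {_ _} => rfl }

variable {k}

/-- Lift of a Lie algebra morphism through a quotient by an ideal inside its kernel. -/
def qlift {L : Type v} {B : Type w} [LieRing L] [LieAlgebra k L] [LieRing B] [LieAlgebra k B]
    (I : LieIdeal k L) (f : L →ₗ⁅k⁆ B) (h : I ≤ f.ker) : (L ⧸ I) →ₗ⁅k⁆ B :=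
  { Submodule.liftQ I.toSubmodule (f : L →ₗ[k] B)
      (fun x hx => by simpa using (LieHom.mem_ker).mp (h hx)) with
    map_lie' := by
      rintro ⟨x⟩ ⟨y⟩
      exact f.map_lie x y }

@[simp]
theorem qlift_mk {L : Type v} {B : Type w} [LieRing L] [LieAlgebra k L] [LieRing B]
    [LieAlgebra k B] (I : LieIdeal k L) (f : L →ₗ⁅k⁆ B) (h : I ≤ f.ker) (x : L) :
    qlift I f h (mkHom k I x) = f x := rfl

/-- In a metabelian Lie algebra the second derived ideal vanishes. -/
theorem derivedSeries_two_eq_bot_of_isMetabelian {B : Type w} [LieRing B] [LieAlgebra k B]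
    (hB : IsMetabelian B) : derivedSeries k B 2 = ⊥ := by
  have hD1 : ∀ x ∈ derivedSeries k B 1, ∀ m ∈ derivedSeries k B 1, ⁅x, m⁆ = (0 : B) := by
    have hspan : (↑(derivedSeries k B 1) : Submodule k B) =
        Submodule.span k {m | ∃ x ∈ (⊤ : LieIdeal k B), ∃ n ∈ (⊤ : LieIdeal k B), ⁅x, n⁆ = m} := by
      rw [show derivedSeries k B 1 = ⁅(⊤ : LieIdeal k B), (⊤ : LieIdeal k B)⁆ by
        rw [derivedSeries_def, derivedSeriesOfIdeal_succ, derivedSeriesOfIdeal_zero]]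
      exact LieSubmodule.lieIdeal_oper_eq_linear_span' ..
    intro x hx
    have hx' : x ∈ Submodule.span k
        {m | ∃ x ∈ (⊤ : LieIdeal k B), ∃ n ∈ (⊤ : LieIdeal k B), ⁅x, n⁆ = m} := by
      rw [← hspan]; exact hx
    clear hx
    induction hx' using Submodule.span_induction with
    | mem z hz =>
      obtain ⟨a, -, b, -, rfl⟩ := hz
      intro m hm
      have hm' : m ∈ Submodule.span k
          {m | ∃ x ∈ (⊤ : LieIdeal k B), ∃ n ∈ (⊤ : LieIdeal k B), ⁅x, n⁆ = m} := by
        rw [← hspan]; exact hm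
      clear hm
      induction hm' using Submodule.span_induction with
      | mem w hw => obtain ⟨c, -, d, -, rfl⟩ := hw; exact hB a b c d
      | zero => exact lie_zero _
      | add u v _ _ hu hv => rw [lie_add, hu, hv, add_zero]
      | smul t u _ hu => rw [lie_smul, hu, smul_zero]
    | zero => intro m _; exact zero_lie m
    | add u v _ _ hu hv =>
      intro m hm; rw [add_lie, hu m hm, hv m hm, add_zero]
    | smul t u _ hu => intro m hm; rw [smul_lie, hu m hm, smul_zero]
  rw [eq_bot_iff, show derivedSeries k B 2 = ⁅derivedSeries k B 1, derivedSeries k B 1⁆ by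
    rw [derivedSeries_def, derivedSeriesOfIdeal_succ]]
  rw [LieSubmodule.lie_le_iff]
  intro x hx m hm
  rw [LieSubmodule.mem_bot]
  exact hD1 x hx m hm

end LieMeta

/-- The free metabelian Lie algebra over `k` on a set `X` of generators: the quotient of the
free Lie algebra by its second derived ideal. -/
abbrev FreeMetabelian (X : Type v) : Type _ :=
  FreeLieAlgebra k X ⧸ derivedSeries k (FreeLieAlgebra k X) 2

namespace FreeMetabelian

/-- The canonical (free) generators of the free metabelian Lie algebra. -/
noncomputable def of (X : Type v) (x : X) : FreeMetabelian k X :=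
  LieMeta.mkHom k (derivedSeries k (FreeLieAlgebra k X) 2) (FreeLieAlgebra.of k x)

theorem isMetabelian (X : Type v) : IsMetabelian (FreeMetabelian k X) := by
  rintro ⟨a⟩ ⟨b⟩ ⟨c⟩ ⟨d⟩
  show LieMeta.mkHom k (derivedSeries k (FreeLieAlgebra k X) 2) ⁅⁅a, b⁆, ⁅c, d⁆⁆ = 0
  have h1 : ∀ x y : FreeLieAlgebra k X, ⁅x, y⁆ ∈ derivedSeries k (FreeLieAlgebra k X) 1 := by
    intro x y
    rw [show derivedSeries k (FreeLieAlgebra k X) 1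
        = ⁅(⊤ : LieIdeal k (FreeLieAlgebra k X)), (⊤ : LieIdeal k (FreeLieAlgebra k X))⁆ by
      rw [derivedSeries_def, derivedSeriesOfIdeal_succ, derivedSeriesOfIdeal_zero]]
    exact LieSubmodule.lie_mem_lie trivial trivial
  have h2 : ⁅⁅a, b⁆, ⁅c, d⁆⁆ ∈ derivedSeries k (FreeLieAlgebra k X) 2 := by
    rw [show derivedSeries k (FreeLieAlgebra k X) 2
        = ⁅derivedSeries k (FreeLieAlgebra k X) 1, derivedSeries k (FreeLieAlgebra k X) 1⁆ by
      rw [derivedSeries_def, derivedSeriesOfIdeal_succ]]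
    exact LieSubmodule.lie_mem_lie (h1 a b) (h1 c d)
  exact (LieSubmodule.Quotient.mk_eq_zero _).mpr h2

variable {k}

/-- The universal property: a map on generators into a metabelian Lie algebra extends
uniquely to the free metabelian Lie algebra. -/
noncomputable def lift {X : Type v} {B : Type w} [LieRing B] [LieAlgebra k B]
    (f : X → B) (hB : IsMetabelian B) : FreeMetabelian k X →ₗ⁅k⁆ B :=
  LieMeta.qlift _ (FreeLieAlgebra.lift k f) (by
    intro x hx
    rw [LieHom.mem_ker]
    have h1 : FreeLieAlgebra.lift k f x ∈
        LieIdeal.map (FreeLieAlgebra.lift k f) (derivedSeries k (FreeLieAlgebra k X) 2) :=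
      LieIdeal.mem_map hx
    have h2 := LieIdeal.derivedSeries_map_le (f := FreeLieAlgebra.lift k f) 2
    rw [LieMeta.derivedSeries_two_eq_bot_of_isMetabelian hB] at h2
    simpa using h2 h1)

@[simp]
theorem lift_of {X : Type v} {B : Type w} [LieRing B] [LieAlgebra k B]
    (f : X → B) (hB : IsMetabelian B) (x : X) : lift f hB (of k X x) = f x := by
  show FreeLieAlgebra.lift k f (FreeLieAlgebra.of k x) = f x
  simp

end FreeMetabelian

namespace LieAG

variable (r n : ℕ)

/-- The inclusion of `F_r` into `F_{r+n}` sending `aᵢ` to `aᵢ`. -/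
noncomputable def incl : FreeMetabelian k (Fin r) →ₗ⁅k⁆ FreeMetabelian k (Fin r ⊕ Fin n) :=
  FreeMetabelian.lift (fun i => FreeMetabelian.of k _ (Sum.inl i))
    (FreeMetabelian.isMetabelian k _)

/-- Evaluation at the point `p`: the unique Lie algebra morphism `F_{r+n} → F_r` which is the
identity on the generators of `F_r` and sends the unknown `xⱼ` to `p j`. -/
noncomputable def ev (p : Fin n → FreeMetabelian k (Fin r)) :
    FreeMetabelian k (Fin r ⊕ Fin n) →ₗ⁅k⁆ FreeMetabelian k (Fin r) :=
  FreeMetabelian.lift (Sum.elim (FreeMetabelian.of k _) p) (FreeMetabelian.isMetabelian k _)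

/-- The algebraic set defined by the system of equations `S ⊆ F_{r+n}`. -/
def vSet (S : Set (FreeMetabelian k (Fin r ⊕ Fin n))) :
    Set (Fin n → FreeMetabelian k (Fin r)) :=
  {p | ∀ f ∈ S, ev k r n p f = 0}

/-- A subset of affine `n`-space over `F_r` is algebraic if it is the solution set of some
system of equations. -/
def IsAlgSet (Y : Set (Fin n → FreeMetabelian k (Fin r))) : Prop :=
  ∃ S, Y = vSet k r n S

/-- The radical of a subset `Y` of affine `n`-space, as a Lie ideal of `F_{r+n}`:
all equations vanishing on every point of `Y`. -/
noncomputable def radIdeal (Y : Set (Fin n → FreeMetabelian k (Fin r))) :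
    LieIdeal k (FreeMetabelian k (Fin r ⊕ Fin n)) :=
  ⨅ (p : Fin n → FreeMetabelian k (Fin r)) (_ : p ∈ Y), (ev k r n p).ker

/-- The coordinate algebra `Γ(Y) = F_{r+n} / Rad(Y)`. -/
abbrev Coord (Y : Set (Fin n → FreeMetabelian k (Fin r))) : Type _ :=
  FreeMetabelian k (Fin r ⊕ Fin n) ⧸ radIdeal k r n Y

/-- The canonical morphism `κ_Y : F_r → Γ(Y)`. -/
noncomputable def kappa (Y : Set (Fin n → FreeMetabelian k (Fin r))) :
    FreeMetabelian k (Fin r) →ₗ⁅k⁆ Coord k r n Y :=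
  (LieMeta.mkHom k (radIdeal k r n Y)).comp (incl k r n)

theorem radIdeal_le_ker {Y : Set (Fin n → FreeMetabelian k (Fin r))}
    {p : Fin n → FreeMetabelian k (Fin r)} (hp : p ∈ Y) :
    radIdeal k r n Y ≤ (ev k r n p).ker := by
  exact iInf₂_le p hp

/-- The `F_r`-morphism `Γ(Y) → F_r` induced by evaluation at a point of `Y`. -/
noncomputable def pointHom {Y : Set (Fin n → FreeMetabelian k (Fin r))}
    {p : Fin n → FreeMetabelian k (Fin r)} (hp : p ∈ Y) :
    Coord k r n Y →ₗ⁅k⁆ FreeMetabelian k (Fin r) :=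
  LieMeta.qlift _ (ev k r n p) (radIdeal_le_ker k r n hp)

/-- The point of affine space associated with a morphism `Γ(Y) → F_r`: the images of
the unknowns. -/
noncomputable def pointOf {Y : Set (Fin n → FreeMetabelian k (Fin r))}
    (φ : Coord k r n Y →ₗ⁅k⁆ FreeMetabelian k (Fin r)) :
    Fin n → FreeMetabelian k (Fin r) :=
  fun j => φ (LieMeta.mkHom k (radIdeal k r n Y) (FreeMetabelian.of k _ (Sum.inr j)))

/-- The Zariski topology on affine `n`-space over `F_r`: the algebraic sets form a
subbasis of closed sets. -/
def zariski : TopologicalSpace (Fin n → FreeMetabelian k (Fin r)) :=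
  TopologicalSpace.generateFrom {U | ∃ S, U = (vSet k r n S)ᶜ}

/-- A closed subset (in the Zariski topology) is irreducible if it is nonempty and is not the
union of two proper closed subsets. -/
def IsIrredClosed (Y : Set (Fin n → FreeMetabelian k (Fin r))) : Prop :=
  Y.Nonempty ∧ ∀ Y₁ Y₂ : Set (Fin n → FreeMetabelian k (Fin r)),
    @IsClosed _ (zariski k r n) Y₁ → @IsClosed _ (zariski k r n) Y₂ →
      Y₁ ⊂ Y → Y₂ ⊂ Y → Y ≠ Y₁ ∪ Y₂

/-- `Y` and `Z` are isomorphic algebraic sets: there are mutually inverse morphisms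
(given coordinatewise by Lie polynomials) between them. -/
def AlgIso {n m : ℕ} (Y : Set (Fin n → FreeMetabelian k (Fin r)))
    (Z : Set (Fin m → FreeMetabelian k (Fin r))) : Prop :=
  ∃ (fs : Fin m → FreeMetabelian k (Fin r ⊕ Fin n))
    (gs : Fin n → FreeMetabelian k (Fin r ⊕ Fin m)),
    (∀ p ∈ Y, (fun j => ev k r n p (fs j)) ∈ Z) ∧
    (∀ q ∈ Z, (fun i => ev k r m q (gs i)) ∈ Y) ∧
    (∀ p ∈ Y, (fun i => ev k r m (fun j => ev k r n p (fs j)) (gs i)) = p) ∧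
    (∀ q ∈ Z, (fun j => ev k r n (fun i => ev k r m q (gs i)) (fs j)) = q)

end LieAG

/-- The Fitting radical of a Lie algebra: the set of elements whose generated Lie ideal is
nilpotent. -/
def fittingSet (B : Type w) [LieRing B] [LieAlgebra k B] : Set B :=
  {x | LieRing.IsNilpotent (LieSubmodule.lieSpan k B ({x} : Set B))}

/-!
If `u` is a commutator and `⁅x, ⁅x, u⁆⁆ = 0`, then `Φ2` applied to the pair `(u, x)` gives
`⁅x, u⁆ = 0`, because the other condition `⁅⁅u, x⁆, u⁆ = 0` is an instance of the metabelian
identity. As `⁅x, u⁆` is again a commutator, nilpotency of `ad x` on `⁅x, y⁆` collapses to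
`⁅x, ⁅x, y⁆⁆ = 0`; likewise `⁅y, ⁅x, y⁆⁆ = 0`, and `Φ2` for `(x, y)` gives `⁅x, y⁆ = 0`.
In a nilpotent subalgebra `ad x` is nilpotent on the subalgebra; an element `x` of the Fitting
radical is even ad-nilpotent on all of `B`, as `ad x` maps `B` into the nilpotent ideal
generated by `x`.
-/

def SatisfiesPhi2 (L : Type*) [LieRing L] : Prop :=
  ∀ x y : L, ⁅⁅x, y⁆, x⁆ = 0 → ⁅⁅x, y⁆, y⁆ = 0 → ⁅x, y⁆ = 0

namespace IsMetabelian

variable {L : Type*} [LieRing L]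

theorem lie_lie_eq_zero_of_lie_lie_lie_eq_zero (hmeta : IsMetabelian L)
    (hPhi2 : SatisfiesPhi2 L) {x a b : L} (h : ⁅x, ⁅x, ⁅a, b⁆⁆⁆ = 0) : ⁅x, ⁅a, b⁆⁆ = 0 := by
  have hux : ⁅⁅a, b⁆, x⁆ = 0 := by
    refine hPhi2 _ _ (hmeta _ _ a b) ?_
    rw [← lie_skew ⁅⁅a, b⁆, x⁆ x, ← lie_skew ⁅a, b⁆ x, lie_neg, neg_neg, h]
  rw [← lie_skew, hux, neg_zero]

variable {R : Type*} [CommRing R] [LieAlgebra R L]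

theorem lie_lie_eq_zero_of_ad_pow_eq_zero (hmeta : IsMetabelian L) (hPhi2 : SatisfiesPhi2 L)
    {x a b : L} {n : ℕ} (h : (ad R L x ^ n) ⁅a, b⁆ = 0) : ⁅x, ⁅a, b⁆⁆ = 0 := by
  induction n generalizing a b with
  | zero => rw [pow_zero, Module.End.one_apply] at h; rw [h, lie_zero]
  | succ n ih =>
    rw [pow_succ, Module.End.mul_apply, ad_apply] at h
    exact hmeta.lie_lie_eq_zero_of_lie_lie_lie_eq_zero hPhi2 (ih h)

theorem lie_eq_zero_of_ad_pow_eq_zero (hmeta : IsMetabelian L) (hPhi2 : SatisfiesPhi2 L)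
    {x y : L} (hx : ∃ m, (ad R L x ^ m) ⁅x, y⁆ = 0) (hy : ∃ n, (ad R L y ^ n) ⁅x, y⁆ = 0) :
    ⁅x, y⁆ = 0 := by
  obtain ⟨m, hm⟩ := hx
  obtain ⟨n, hn⟩ := hy
  refine hPhi2 x y ?_ ?_
  · rw [← lie_skew, hmeta.lie_lie_eq_zero_of_ad_pow_eq_zero hPhi2 hm, neg_zero]
  · rw [← lie_skew, hmeta.lie_lie_eq_zero_of_ad_pow_eq_zero hPhi2 hn, neg_zero]

end IsMetabelian

theorem LieSubalgebra.exists_ad_pow_eq_zero {R L : Type*} [CommRing R] [LieRing L]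
    [LieAlgebra R L] (S : LieSubalgebra R L) [LieRing.IsNilpotent S] {x z : L} (hx : x ∈ S)
    (hz : z ∈ S) : ∃ n, (ad R L x ^ n) z = 0 := by
  obtain ⟨n, hn⟩ := nilpotent_ad_of_nilpotent_algebra (R := R) (L := S)
  refine ⟨n, ?_⟩
  rw [← LieSubalgebra.coe_ad_pow R L S ⟨x, hx⟩ ⟨z, hz⟩, hn, LinearMap.zero_apply,
    ZeroMemClass.coe_zero]

theorem exists_ad_pow_eq_zero_of_mem_fittingSet {k B : Type*} [Field k] [LieRing B]
    [LieAlgebra k B] {x : B} (hx : x ∈ fittingSet k B) (y : B) : ∃ n, (ad k B x ^ n) y = 0 := by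
  set I := LieSubmodule.lieSpan k B ({x} : Set B)
  have : LieRing.IsNilpotent (I : LieSubalgebra k B) := hx
  have hxI : x ∈ I := LieSubmodule.subset_lieSpan rfl
  obtain ⟨n, hn⟩ := (I : LieSubalgebra k B).exists_ad_pow_eq_zero hxI (lie_mem_left k B I x y hxI)
  exact ⟨n + 1, by rwa [pow_succ, Module.End.mul_apply, ad_apply]⟩

/-- If `B` is a metabelian Lie algebra satisfying axiom `Φ2`, then every
nilpotent Lie subalgebra of `B` is abelian; in particular any two elements of the Fitting
radical of `B` commute. -/
theorem nilpotent_subalgebras_abelian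
    (k : Type u) [Field k] (B : Type v) [LieRing B] [LieAlgebra k B]
    (hmeta : IsMetabelian B)
    (hPhi2 : ∀ x y : B, ⁅⁅x, y⁆, x⁆ = 0 → ⁅⁅x, y⁆, y⁆ = 0 → ⁅x, y⁆ = 0) :
    (∀ C : LieSubalgebra k B, LieRing.IsNilpotent C →
      ∀ x ∈ C, ∀ y ∈ C, ⁅x, y⁆ = (0 : B)) ∧
    (∀ x ∈ fittingSet k B, ∀ y ∈ fittingSet k B, ⁅x, y⁆ = (0 : B)) := by
  refine ⟨fun C _ x hx y hy => ?_, fun x hx y hy => ?_⟩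
  · exact hmeta.lie_eq_zero_of_ad_pow_eq_zero hPhi2
      (C.exists_ad_pow_eq_zero hx (C.lie_mem hx hy)) (C.exists_ad_pow_eq_zero hy (C.lie_mem hx hy))
  · exact hmeta.lie_eq_zero_of_ad_pow_eq_zero hPhi2
      (exists_ad_pow_eq_zero_of_mem_fittingSet hx _) (exists_ad_pow_eq_zero_of_mem_fittingSet hy _)
end

section
/- Let B be a metabelian Lie algebra over a field k satisfying axioms Φ2 and Φ3. If a ∈ B with a ∉ Fit(B), then for every nonzero b ∈ Fit(B) one has ⁅a,b⁆ ≠ 0. -/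
open LieAlgebra

universe u v w

variable (k : Type u) [Field k]

/-! Suppose `⁅a, b⁆ = 0`. Nilpotency of `ad b` together with `Φ2` gives `⁅b, ⁅b, x⁆⁆ = 0` for
all `x`. Commutative transitivity through `b`, and then through a nonzero element `⁅b, x₀⁆`
(which commutes with all of `[B, B]`), shows that `a` centralizes `[B, B]`; if no such `x₀`
exists, `b` is central and `Φ3` makes `B` abelian. Then `k a + [B, B]` is an abelian ideal
containing `a`, so `a ∈ Fit(B)`. -/

section

variable {k} {B : Type v} [LieRing B] [LieAlgebra k B]

theorem lie_mem_derivedSeries_one (x y : B) : ⁅x, y⁆ ∈ derivedSeries k B 1 := by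
  rw [derivedSeries_def, derivedSeriesOfIdeal_succ, derivedSeriesOfIdeal_zero]
  exact LieSubmodule.lie_mem_lie (LieSubmodule.mem_top x) (LieSubmodule.mem_top y)

theorem lie_eq_zero_of_mem_derivedSeries_one {a e : B} (h : ∀ x y : B, ⁅a, ⁅x, y⁆⁆ = 0)
    (he : e ∈ derivedSeries k B 1) : ⁅a, e⁆ = 0 := by
  have hle : Submodule.span k {⁅x, y⁆ | (x : B) (y : B)} ≤ LinearMap.ker (ad k B a) := by
    rw [Submodule.span_le]
    rintro _ ⟨x, y, rfl⟩
    exact h x y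
  exact hle (by rwa [← coe_derivedSeries_one_eq])

theorem IsMetabelian.lie_eq_zero_of_mem_derivedSeries_one (hmeta : IsMetabelian B) {d e : B}
    (hd : d ∈ derivedSeries k B 1) (he : e ∈ derivedSeries k B 1) : ⁅d, e⁆ = 0 := by
  have hde : ⁅d, e⁆ ∈ derivedSeries k B 2 := by
    rw [derivedSeries_def, derivedSeriesOfIdeal_succ]
    exact LieSubmodule.lie_mem_lie hd he
  rwa [LieMeta.derivedSeries_two_eq_bot_of_isMetabelian hmeta, LieSubmodule.mem_bot] at hde

def LieIdeal.supDerivedSeriesOne (p : Submodule k B) : LieIdeal k B where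
  toSubmodule := p ⊔ (derivedSeries k B 1 : Submodule k B)
  lie_mem {x m} _ := Submodule.mem_sup_right (lie_mem_derivedSeries_one x m)

theorem isNilpotent_ad_of_mem_fittingSet {u : B} (hu : u ∈ fittingSet k B) :
    IsNilpotent (ad k B u) := by
  set I := LieSubmodule.lieSpan k B ({u} : Set B)
  have : LieRing.IsNilpotent I := hu
  have huI : u ∈ I := LieSubmodule.subset_lieSpan rfl
  obtain ⟨m, hm⟩ := nilpotent_ad_of_nilpotent_algebra k I
  refine ⟨m + 1, LinearMap.ext fun x => ?_⟩
  have hux : ⁅u, x⁆ ∈ I := by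
    rw [← lie_skew]
    exact I.neg_mem (I.lie_mem huI)
  calc (ad k B u ^ (m + 1)) x = (ad k B u ^ m) ⁅u, x⁆ := by
        rw [pow_succ, Module.End.mul_apply, ad_apply]
    _ = ((ad k I ⟨u, huI⟩ ^ m) ⟨⁅u, x⁆, hux⟩ : B) :=
        (LieSubalgebra.coe_ad_pow k B (LieIdeal.toLieSubalgebra k B I) ⟨u, huI⟩
          ⟨⁅u, x⁆, hux⟩ m).symm
    _ = 0 := by rw [hm]; rfl

theorem IsMetabelian.lie_eq_zero_of_lie_lie_eq_zero (hmeta : IsMetabelian B)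
    (hPhi2 : ∀ x y : B, ⁅⁅x, y⁆, x⁆ = 0 → ⁅⁅x, y⁆, y⁆ = 0 → ⁅x, y⁆ = 0)
    {u p q : B} (h : ⁅u, ⁅u, ⁅p, q⁆⁆⁆ = 0) : ⁅u, ⁅p, q⁆⁆ = 0 := by
  have h₁ : ⁅⁅⁅p, q⁆, u⁆, ⁅p, q⁆⁆ = 0 := by
    rw [← lie_skew ⁅p, q⁆ u, neg_lie, hmeta, neg_zero]
  have h₂ : ⁅⁅⁅p, q⁆, u⁆, u⁆ = 0 := by
    rw [← lie_skew ⁅p, q⁆ u, neg_lie, ← lie_skew _ u, neg_neg, h]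
  rw [← lie_skew, hPhi2 _ _ h₁ h₂, neg_zero]

theorem IsMetabelian.ad_pow_two_eq_zero_of_ad_pow_eq_zero (hmeta : IsMetabelian B)
    (hPhi2 : ∀ x y : B, ⁅⁅x, y⁆, x⁆ = 0 → ⁅⁅x, y⁆, y⁆ = 0 → ⁅x, y⁆ = 0)
    {u x : B} {m : ℕ} (hm : (ad k B u ^ m) x = 0) : (ad k B u ^ 2) x = 0 := by
  suffices descend : ∀ n, (ad k B u ^ (n + 2)) x = 0 → (ad k B u ^ 2) x = 0 by
    refine descend m ?_
    rw [add_comm, pow_add, Module.End.mul_apply, hm, map_zero]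
  intro n
  induction n with
  | zero => exact id
  | succ n ih =>
    intro hn
    refine ih ?_
    simp only [pow_succ', Module.End.mul_apply, ad_apply] at hn ⊢
    exact hmeta.lie_eq_zero_of_lie_lie_eq_zero hPhi2 hn

theorem IsMetabelian.lie_lie_eq_zero_of_mem_fittingSet (hmeta : IsMetabelian B)
    (hPhi2 : ∀ x y : B, ⁅⁅x, y⁆, x⁆ = 0 → ⁅⁅x, y⁆, y⁆ = 0 → ⁅x, y⁆ = 0)
    {u : B} (hu : u ∈ fittingSet k B) (x : B) : ⁅u, ⁅u, x⁆⁆ = 0 := by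
  obtain ⟨m, hm⟩ := isNilpotent_ad_of_mem_fittingSet hu
  simpa only [pow_two, Module.End.mul_apply, ad_apply] using
    hmeta.ad_pow_two_eq_zero_of_ad_pow_eq_zero hPhi2 (LinearMap.congr_fun hm x)

theorem IsMetabelian.lie_lie_eq_zero_of_lie_eq_zero_of_mem_fittingSet (hmeta : IsMetabelian B)
    (hPhi2 : ∀ x y : B, ⁅⁅x, y⁆, x⁆ = 0 → ⁅⁅x, y⁆, y⁆ = 0 → ⁅x, y⁆ = 0)
    (hPhi3 : ∀ x y z : B, x ≠ 0 → ⁅x, y⁆ = 0 → ⁅x, z⁆ = 0 → ⁅y, z⁆ = 0)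
    {a b : B} (hb : b ∈ fittingSet k B) (hb0 : b ≠ 0) (hab : ⁅a, b⁆ = 0) (x y : B) :
    ⁅a, ⁅x, y⁆⁆ = 0 := by
  by_cases hcen : ∀ z : B, ⁅b, z⁆ = 0
  · rw [hPhi3 b x y hb0 (hcen x) (hcen y), lie_zero]
  obtain ⟨z, hz⟩ := not_forall.mp hcen
  have hba : ⁅b, a⁆ = 0 := by rw [← lie_skew, hab, neg_zero]
  have hac : ⁅a, ⁅b, z⁆⁆ = 0 :=
    hPhi3 b a _ hb0 hba (hmeta.lie_lie_eq_zero_of_mem_fittingSet hPhi2 hb z)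
  have hca : ⁅⁅b, z⁆, a⁆ = 0 := by rw [← lie_skew, hac, neg_zero]
  exact hPhi3 _ a _ hz hca (hmeta b z x y)

theorem IsMetabelian.mem_fittingSet_of_forall_lie_lie_eq_zero (hmeta : IsMetabelian B) {a : B}
    (h : ∀ x y : B, ⁅a, ⁅x, y⁆⁆ = 0) : a ∈ fittingSet k B := by
  set P := LieIdeal.supDerivedSeriesOne (k ∙ a)
  have hP : ⁅P, P⁆ = ⊥ := by
    rw [← LieSubmodule.lie_abelian_iff_lie_self_eq_bot]
    refine ⟨fun ⟨u, hu⟩ ⟨v, hv⟩ => Subtype.ext ?_⟩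
    obtain ⟨_, hs, d, hd, rfl⟩ := Submodule.mem_sup.mp hu
    obtain ⟨_, ht, e, he, rfl⟩ := Submodule.mem_sup.mp hv
    obtain ⟨s, rfl⟩ := Submodule.mem_span_singleton.mp hs
    obtain ⟨t, rfl⟩ := Submodule.mem_span_singleton.mp ht
    have hae : ⁅a, e⁆ = 0 := _root_.lie_eq_zero_of_mem_derivedSeries_one h he
    have hda : ⁅d, a⁆ = 0 := by
      rw [← lie_skew, _root_.lie_eq_zero_of_mem_derivedSeries_one h hd, neg_zero]
    have hde : ⁅d, e⁆ = 0 := hmeta.lie_eq_zero_of_mem_derivedSeries_one hd he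
    simp [add_lie, lie_add, smul_lie, lie_smul, hae, hda, hde]
  have hle : LieSubmodule.lieSpan k B ({a} : Set B) ≤ P :=
    LieSubmodule.lieSpan_le.mpr <| Set.singleton_subset_iff.mpr <|
      Submodule.mem_sup_left (Submodule.mem_span_singleton_self a)
  have : IsLieAbelian (LieSubmodule.lieSpan k B ({a} : Set B)) := by
    rw [LieSubmodule.lie_abelian_iff_lie_self_eq_bot, eq_bot_iff, ← hP]
    exact LieSubmodule.mono_lie hle hle
  show LieRing.IsNilpotent _
  infer_instance

end

/-- If `B` is a metabelian Lie algebra satisfying axioms `Φ2` and `Φ3`,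
`a ∉ Fit(B)` and `b ∈ Fit(B)` is nonzero, then `⁅a,b⁆ ≠ 0`. -/
theorem lie_ne_zero_of_not_mem_fitting
    (k : Type u) [Field k] (B : Type v) [LieRing B] [LieAlgebra k B]
    (hmeta : IsMetabelian B)
    (hPhi2 : ∀ x y : B, ⁅⁅x, y⁆, x⁆ = 0 → ⁅⁅x, y⁆, y⁆ = 0 → ⁅x, y⁆ = 0)
    (hPhi3 : ∀ x y z : B, x ≠ 0 → ⁅x, y⁆ = 0 → ⁅x, z⁆ = 0 → ⁅y, z⁆ = 0)
    (a : B) (ha : a ∉ fittingSet k B)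
    (b : B) (hb : b ∈ fittingSet k B) (hb0 : b ≠ 0) :
    ⁅a, b⁆ ≠ 0 := fun hab =>
  ha <| hmeta.mem_fittingSet_of_forall_lie_lie_eq_zero <|
    hmeta.lie_lie_eq_zero_of_lie_eq_zero_of_mem_fittingSet hPhi2 hPhi3 hb hb0 hab
end

section
/- Let B be a metabelian F_r-algebra (with designated embedding ι : F_r → B) satisfying axioms Φ2 and Φ3, and let c₁,…,cₙ ∈ F_r with n ≤ r be linearly independent modulo Fit(F_r) = F_r². Then ι(c₁),…,ι(cₙ) are linearly independent modulo Fit(B). -/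
open LieAlgebra

universe u v w

variable (k : Type u) [Field k]

section Fitting

variable {k} {L : Type v} {B : Type w} [LieRing L] [LieAlgebra k L] [LieRing B] [LieAlgebra k B]

theorem LieIdeal.isNilpotent_of_le_comap_of_injective {f : L →ₗ⁅k⁆ B}
    (hf : Function.Injective f) {I : LieIdeal k L} {J : LieIdeal k B} (hIJ : I ≤ J.comap f)
    [LieRing.IsNilpotent J] : LieRing.IsNilpotent I := by
  let g : I →ₗ⁅k⁆ J :=
    { toFun := fun x => ⟨f x.1, hIJ x.2⟩
      map_add' := fun x y => Subtype.ext (map_add f x.1 y.1)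
      map_smul' := fun t x => Subtype.ext (map_smul f t x.1)
      map_lie' := fun {x y} => Subtype.ext (f.map_lie x.1 y.1) }
  have hg : Function.Injective g := fun x y hxy => Subtype.ext (hf (congrArg Subtype.val hxy))
  exact hg.lieAlgebra_isNilpotent

theorem mem_fittingSet_of_injective {f : L →ₗ⁅k⁆ B} (hf : Function.Injective f) {u : L}
    (hu : f u ∈ fittingSet k B) : u ∈ fittingSet k L := by
  have : LieRing.IsNilpotent (LieSubmodule.lieSpan k B {f u}) := hu
  exact LieIdeal.isNilpotent_of_le_comap_of_injective hf (J := LieSubmodule.lieSpan k B {f u})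
    (LieSubmodule.lieSpan_le.mpr <| Set.singleton_subset_iff.mpr <| LieSubmodule.subset_lieSpan rfl)

end Fitting

theorem linIndep_mod_fitting_of_linIndep_general
    (k : Type u) [Field k] (r : ℕ)
    (B : Type v) [LieRing B] [LieAlgebra k B]
    (ι : FreeMetabelian k (Fin r) →ₗ⁅k⁆ B) (hι : Function.Injective ι)
    (n : ℕ) (c : Fin n → FreeMetabelian k (Fin r))
    (hc : ∀ α : Fin n → k,
      (∑ i, α i • c i) ∈ fittingSet k (FreeMetabelian k (Fin r)) → α = 0) :
    ∀ α : Fin n → k, (∑ i, α i • ι (c i)) ∈ fittingSet k B → α = 0 := by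
  intro α hα
  refine hc α (mem_fittingSet_of_injective hι ?_)
  simpa only [map_sum, map_smul] using hα

/-- Let `B` be a metabelian `F_r`-algebra satisfying axioms `Φ2` and `Φ3`
and let `c₁,…,cₙ ∈ F_r` (`n ≤ r`) be linearly independent modulo `Fit(F_r)`.  Then
`ι(c₁),…,ι(cₙ)` are linearly independent modulo `Fit(B)`. -/
theorem linIndep_mod_fitting_of_linIndep
    (k : Type u) [Field k] (r : ℕ) (hr : 2 ≤ r)
    (B : Type v) [LieRing B] [LieAlgebra k B]
    (hmeta : IsMetabelian B)
    (hPhi2 : ∀ x y : B, ⁅⁅x, y⁆, x⁆ = 0 → ⁅⁅x, y⁆, y⁆ = 0 → ⁅x, y⁆ = 0)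
    (hPhi3 : ∀ x y z : B, x ≠ 0 → ⁅x, y⁆ = 0 → ⁅x, z⁆ = 0 → ⁅y, z⁆ = 0)
    (ι : FreeMetabelian k (Fin r) →ₗ⁅k⁆ B) (hι : Function.Injective ι)
    (n : ℕ) (hn : n ≤ r) (c : Fin n → FreeMetabelian k (Fin r))
    (hc : ∀ α : Fin n → k,
      (∑ i, α i • c i) ∈ fittingSet k (FreeMetabelian k (Fin r)) → α = 0) :
    ∀ α : Fin n → k, (∑ i, α i • ι (c i)) ∈ fittingSet k B → α = 0 :=
  linIndep_mod_fitting_of_linIndep_general k r B ι hι n c hc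
end
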